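/- Let 𝒮 ⊆ 2^V be simple and separator-free and let 𝒮' be obtained from 𝒮 by adding the set B\A for each minimal A ∈ 𝒮 and maximal B ∈ 𝒮 with A ⊊ B and B\A ∉ 𝒮. Then 𝒮' is cut-free: no nontrivial subset C of V (2 ≤ |C| ≤ |V|−1) satisfies that no member of 𝒮' intersects C. -/

import Mathlib

def MinimalIn {V : Type*} (𝒮 : Set (Set V)) (A : Set V) : Prop :=
  A ∈ 𝒮 ∧ ∀ A' ∈ 𝒮, A' ⊆ A → A' = A

def MaximalIn {V : Type*} (𝒮 : Set (Set V)) (B : Set V) : Prop :=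
  B ∈ 𝒮 ∧ ∀ B' ∈ 𝒮, B ⊆ B' → B' = B

/-- No two distinct elements belong to exactly the same members of `𝒮`. -/
def SimpleFam {V : Type*} (𝒮 : Set (Set V)) : Prop :=
  ∀ u v : V, (∀ S ∈ 𝒮, (u ∈ S ↔ v ∈ S)) → u = v

def IsSeparator {V : Type*} (𝒮 : Set (Set V)) (C : Set V) : Prop :=
  C.Nonempty ∧ C ≠ Set.univ ∧ ∀ S ∈ 𝒮, S ⊆ C ∨ Disjoint S C

def SeparatorFree {V : Type*} (𝒮 : Set (Set V)) : Prop :=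
  ¬ ∃ C : Set V, IsSeparator 𝒮 C

/-- `S` intersects `C` (crossingly). -/
def Crosses {V : Type*} (S C : Set V) : Prop :=
  (S ∩ C).Nonempty ∧ (C \ S).Nonempty ∧ (S \ C).Nonempty

/-- A cut of a family `ℱ`: a subset `C` with `2 ≤ |C| ≤ |V|-1` that no member
of `ℱ` intersects crossingly. -/
def IsCut {V : Type*} [Fintype V] (ℱ : Set (Set V)) (C : Set V) : Prop :=
  2 ≤ C.ncard ∧ C.ncard ≤ Fintype.card V - 1 ∧ ∀ S ∈ ℱ, ¬ Crosses S C

def CutFree {V : Type*} [Fintype V] (ℱ : Set (Set V)) : Prop :=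
  ¬ ∃ C : Set V, IsCut ℱ C

/-- The augmented family `𝒮'`. -/
def AugFam {V : Type*} (𝒮 : Set (Set V)) : Set (Set V) :=
  𝒮 ∪ {T | ∃ A B : Set V, MinimalIn 𝒮 A ∧ MaximalIn 𝒮 B ∧ A ⊂ B ∧ B \ A ∉ 𝒮 ∧ T = B \ A}

/-!
Let `C` be a cut of `𝒮'`. Two points of `C` are told apart by some `S₀ ∈ 𝒮`, which cannot cross `C`
and therefore lies strictly inside `C`; since `C` is not a separator of `𝒮`, some `S₁ ∈ 𝒮` strictly
contains `C`. Shrinking `S₀` to a minimal `A` and growing `S₁` to a maximal `B` of `𝒮`,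
the set `B \ A ∈ 𝒮'` crosses `C`: it meets `C` in `C \ S₀`, misses the points of `A ⊆ C`,
and contains `S₁ \ C`.
-/

section

variable {V : Type*}

lemma Crosses.of_not_subset_of_not_superset {S C : Set V} (hSC : (S ∩ C).Nonempty)
    (hS : ¬ S ⊆ C) (hC : ¬ C ⊆ S) : Crosses S C :=
  ⟨hSC, Set.sdiff_nonempty.2 hC, Set.sdiff_nonempty.2 hS⟩

lemma crosses_diff_of_ssubset_of_ssubset {A S₀ C S₁ B : Set V} (hA : A.Nonempty)
    (hAS₀ : A ⊆ S₀) (hS₀C : S₀ ⊂ C) (hCS₁ : C ⊂ S₁) (hS₁B : S₁ ⊆ B) : Crosses (B \ A) C := by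
  obtain ⟨w, hwC, hwS₀⟩ := Set.exists_of_ssubset hS₀C
  obtain ⟨x, hxS₁, hxC⟩ := Set.exists_of_ssubset hCS₁
  obtain ⟨a, ha⟩ := hA
  have hAC : A ⊆ C := hAS₀.trans hS₀C.subset
  exact ⟨⟨w, ⟨hS₁B (hCS₁.subset hwC), fun hwA => hwS₀ (hAS₀ hwA)⟩, hwC⟩,
    ⟨a, hAC ha, fun h => h.2 ha⟩, ⟨x, ⟨hS₁B hxS₁, fun hxA => hxC (hAC hxA)⟩, hxC⟩⟩

section Family

variable {𝒮 : Set (Set V)}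

lemma minimalIn_iff {A : Set V} : MinimalIn 𝒮 A ↔ Minimal (· ∈ 𝒮) A :=
  (minimal_iff.trans <| and_congr_right fun _ => forall₂_congr fun _ _ => forall_congr' fun _ => eq_comm).symm

lemma maximalIn_iff {B : Set V} : MaximalIn 𝒮 B ↔ Maximal (· ∈ 𝒮) B :=
  (maximal_iff.trans <| and_congr_right fun _ => forall₂_congr fun _ _ => forall_congr' fun _ => eq_comm).symm

lemma exists_minimalIn_subset [Finite V] {S : Set V} (hS : S ∈ 𝒮) : ∃ A, MinimalIn 𝒮 A ∧ A ⊆ S :=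
  let ⟨A, hAS, hA⟩ := Finite.exists_le_minimal hS
  ⟨A, minimalIn_iff.2 hA, hAS⟩

lemma exists_maximalIn_superset [Finite V] {S : Set V} (hS : S ∈ 𝒮) :
    ∃ B, MaximalIn 𝒮 B ∧ S ⊆ B :=
  let ⟨B, hSB, hB⟩ := Finite.exists_le_maximal hS
  ⟨B, maximalIn_iff.2 hB, hSB⟩

lemma diff_mem_augFam {A B : Set V} (hA : MinimalIn 𝒮 A) (hB : MaximalIn 𝒮 B) (hAB : A ⊂ B) :
    B \ A ∈ AugFam 𝒮 := by
  by_cases hBA : B \ A ∈ 𝒮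
  · exact Or.inl hBA
  · exact Or.inr ⟨A, B, hA, hB, hAB, hBA, rfl⟩

lemma SimpleFam.exists_mem_ssubset (hsimple : SimpleFam 𝒮) {C : Set V} {u v : V} (hu : u ∈ C)
    (hv : v ∈ C) (huv : u ≠ v) (hC : ∀ S ∈ 𝒮, ¬ Crosses S C) : ∃ S ∈ 𝒮, S ⊂ C := by
  obtain ⟨S, hS, hSuv⟩ : ∃ S ∈ 𝒮, ¬ (u ∈ S ↔ v ∈ S) := by
    by_contra! h
    exact huv (hsimple u v h)
  obtain ⟨⟨x, hxS, hxC⟩, ⟨y, hyC, hyS⟩⟩ : (S ∩ C).Nonempty ∧ (C \ S).Nonempty := by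
    by_cases huS : u ∈ S
    · exact ⟨⟨u, huS, hu⟩, ⟨v, hv, fun hvS => hSuv (iff_of_true huS hvS)⟩⟩
    · exact ⟨⟨v, not_not.1 fun hvS => hSuv (iff_of_false huS hvS), hv⟩, ⟨u, hu, huS⟩⟩
  have hSC : S ⊆ C := by
    by_contra hSC
    exact hC S hS (.of_not_subset_of_not_superset ⟨x, hxS, hxC⟩ hSC fun h => hyS (h hyC))
  exact ⟨S, hS, ssubset_of_subset_not_subset hSC fun h => hyS (h hyC)⟩

lemma SeparatorFree.exists_mem_ssuperset (hsf : SeparatorFree 𝒮) {C : Set V}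
    (hne : C.Nonempty) (huniv : C ≠ Set.univ) (hC : ∀ S ∈ 𝒮, ¬ Crosses S C) :
    ∃ S ∈ 𝒮, C ⊂ S := by
  by_contra! hno
  refine hsf ⟨C, hne, huniv, fun S hS => or_iff_not_imp_left.2 fun hSC => ?_⟩
  rw [Set.disjoint_iff_inter_eq_empty, ← Set.not_nonempty_iff_eq_empty]
  exact fun hmeet => hC S hS <| .of_not_subset_of_not_superset hmeet hSC fun hCS =>
    hno S hS (ssubset_of_subset_not_subset hCS hSC)

end Family

lemma IsCut.ne_univ [Fintype V] {ℱ : Set (Set V)} {C : Set V} (hC : IsCut ℱ C) :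
    C ≠ Set.univ := by
  rintro rfl
  have := hC.1
  have := hC.2.1
  rw [Set.ncard_univ, Nat.card_eq_fintype_card] at *
  omega

end

/-- For a simple separator-free family `𝒮`, the augmented family `𝒮'` is cut-free. -/
theorem augFam_cutFree
    {V : Type*} [Fintype V]
    (𝒮 : Set (Set V)) (hne : ∅ ∉ 𝒮)
    (hsimple : SimpleFam 𝒮) (hsf : SeparatorFree 𝒮) :
    CutFree (AugFam 𝒮) := by
  rintro ⟨C, hC⟩
  have hcross : ∀ S ∈ 𝒮, ¬ Crosses S C := fun S hS => hC.2.2 S (Or.inl hS)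
  obtain ⟨u, hu, v, hv, huv⟩ := (Set.one_lt_ncard C.toFinite).1 hC.1
  obtain ⟨S₀, hS₀, hS₀C⟩ := hsimple.exists_mem_ssubset hu hv huv hcross
  obtain ⟨S₁, hS₁, hCS₁⟩ := hsf.exists_mem_ssuperset ⟨u, hu⟩ hC.ne_univ hcross
  obtain ⟨A, hA, hAS₀⟩ := exists_minimalIn_subset hS₀
  obtain ⟨B, hB, hS₁B⟩ := exists_maximalIn_superset hS₁
  have hAne : A.Nonempty := Set.nonempty_iff_ne_empty.2 fun h => hne (h ▸ hA.1)
  have hAB : A ⊂ B := ((hAS₀.trans_ssubset hS₀C).trans hCS₁).trans_subset hS₁B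
  exact hC.2.2 _ (diff_mem_augFam hA hB hAB)
    (crosses_diff_of_ssubset_of_ssubset hAne hAS₀ hS₀C hCS₁ hS₁B)
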